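/- Suppose binary variables x_{ij}^k ∈ {0,1} satisfy Σ_{k∈V(i)} x_{ij}^k = 1 for all i ≠ j, and nonnegative flows satisfy the recursion f_{ij} = N_{ij} + Σ_{s : i∈V(s)} f_{sj} x_{sj}^i. Setting f_{ij}^k := f_{ij} x_{ij}^k, the variables f_{ij}^k satisfy both the flow conservation equation Σ_k f_{ij}^k − Σ_h f_{hj}^i = N_{ij} and the tree-shaped constraint Σ_{k≠h} f_{ij}^k f_{ij}^h = 0. -/
import Mathlib


/-- Any feasible solution of the binary model RFFA III induces, via `f_{ij}^k := f_{ij} x_{ij}^k`,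
a solution satisfying both the flow conservation equation and the tree-shaped constraint. -/
theorem stmt8 {ι : Type*} [DecidableEq ι] (V : Finset ι) (Vn : ι → Finset ι)
    (x : ι → ι → ι → ℝ) (f N : ι → ι → ℝ)
    (hx : ∀ i j k, x i j k = 0 ∨ x i j k = 1)
    (hxsum : ∀ i j, i ≠ j → ∑ k ∈ Vn i, x i j k = 1)
    (hN : ∀ i j, 0 ≤ N i j)
    (hrec : ∀ i j, f i j = N i j + ∑ s ∈ V.filter (fun s => i ∈ Vn s), f s j * x s j i) :
    ∀ i j, i ≠ j →
      ((∑ k ∈ Vn i, f i j * x i j k) -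
        (∑ h ∈ V.filter (fun h => i ∈ Vn h), f h j * x h j i) = N i j) ∧
      (∑ k ∈ Vn i, ∑ h ∈ (Vn i).erase k, (f i j * x i j k) * (f i j * x i j h) = 0) := by
  intro i j hij
  constructor
  · rw [← Finset.mul_sum, hxsum i j hij, mul_one]
    have := hrec i j
    linarith
  · apply Finset.sum_eq_zero
    intro k hk
    apply Finset.sum_eq_zero
    intro h hh
    have hhk : h ≠ k := Finset.ne_of_mem_erase hh
    have hh' : h ∈ Vn i := Finset.mem_of_mem_erase hh
    have hzero : x i j k * x i j h = 0 := by
      by_contra hne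
      rcases hx i j k with hk1 | hk1
      · exact hne (by rw [hk1, zero_mul])
      rcases hx i j h with hh1 | hh1
      · exact hne (by rw [hh1, mul_zero])
      have hsum := hxsum i j hij
      have h1 : ∑ k ∈ Vn i, x i j k = x i j k + ∑ m ∈ (Vn i).erase k, x i j m :=
        (Finset.add_sum_erase _ _ hk).symm
      have h2 : ∑ m ∈ (Vn i).erase k, x i j m
          = x i j h + ∑ m ∈ ((Vn i).erase k).erase h, x i j m :=
        (Finset.add_sum_erase _ _ (Finset.mem_erase.mpr ⟨hhk, hh'⟩)).symm
      have h3 : (0:ℝ) ≤ ∑ m ∈ ((Vn i).erase k).erase h, x i j m :=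
        Finset.sum_nonneg fun m _ => by rcases hx i j m with h' | h' <;> simp [h']
      rw [h1, h2, hk1, hh1] at hsum
      linarith
    calc (f i j * x i j k) * (f i j * x i j h)
        = (f i j * f i j) * (x i j k * x i j h) := by ring
      _ = 0 := by rw [hzero, mul_zero]
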